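/- arXiv:2512.10816 — 4 statements merged into one kernel-verified Lean document; each statement's English description precedes it below -/
import Mathlib

section
/- For all CN-formulas φ, ψ: (1) φ □→ ψ ∈ CnCK if and only if ψ ∈ CnCK; (2) φ ◇→ ψ ∉ CnCK. -/
/-- Formulas of the conditional language CN. -/
inductive CNForm : Type
  | atom : ℕ → CNForm
  | conj : CNForm → CNForm → CNForm
  | disj : CNForm → CNForm → CNForm
  | impl : CNForm → CNForm → CNForm
  | neg  : CNForm → CNForm
  | boxto : CNForm → CNForm → CNForm
  | diato : CNForm → CNForm → CNForm

/-- A Fischer–Servi conditional model. -/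
structure FSCModel where
  W : Type
  nonempty : Nonempty W
  le : W → W → Prop
  le_refl : ∀ w, le w w
  le_trans : ∀ {w v u}, le w v → le v u → le w u
  R : W → Set W × Set W → W → Prop
  fs1 : ∀ {w w' v} (XY : Set W × Set W), le w w' → R w XY v → ∃ v', R w' XY v' ∧ le v v'
  fs2 : ∀ {w v v'} (XY : Set W × Set W), R w XY v → le v v' → ∃ w', le w w' ∧ R w' XY v'
  Vpos : ℕ → W → Prop
  Vneg : ℕ → W → Prop
  Vpos_mono : ∀ (p : ℕ) {w v}, le w v → Vpos p w → Vpos p v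
  Vneg_mono : ∀ (p : ℕ) {w v}, le w v → Vneg p w → Vneg p v

/-- `M.sat true φ w` is verification `M,w ⊨⁺ φ`; `M.sat false φ w` is falsification `M,w ⊨⁻ φ`.
In the conditional clauses, the accessibility relation is indexed by the bi-extension
`({x | M,x ⊨⁺ ψ}, {x | M,x ⊨⁻ ψ})` of the antecedent ψ. -/
def FSCModel.sat (M : FSCModel) : Bool → CNForm → M.W → Prop
  | true,  .atom p,   w => M.Vpos p w
  | false, .atom p,   w => M.Vneg p w
  | true,  .conj φ ψ, w => M.sat true φ w ∧ M.sat true ψ w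
  | false, .conj φ ψ, w => M.sat false φ w ∨ M.sat false ψ w
  | true,  .disj φ ψ, w => M.sat true φ w ∨ M.sat true ψ w
  | false, .disj φ ψ, w => M.sat false φ w ∧ M.sat false ψ w
  | true,  .impl φ ψ, w => ∀ v, M.le w v → M.sat true φ v → M.sat true ψ v
  | false, .impl φ ψ, w => ∀ v, M.le w v → M.sat true φ v → M.sat false ψ v
  | true,  .neg φ,    w => M.sat false φ w
  | false, .neg φ,    w => M.sat true φ w
  | true,  .boxto ψ χ, w => ∀ v, M.le w v → ∀ u,
      M.R v ({x | M.sat true ψ x}, {x | M.sat false ψ x}) u → M.sat true χ u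
  | false, .boxto ψ χ, w => ∀ v, M.le w v → ∀ u,
      M.R v ({x | M.sat true ψ x}, {x | M.sat false ψ x}) u → M.sat false χ u
  | true,  .diato ψ χ, w => ∃ u,
      M.R w ({x | M.sat true ψ x}, {x | M.sat false ψ x}) u ∧ M.sat true χ u
  | false, .diato ψ χ, w => ∃ u,
      M.R w ({x | M.sat true ψ x}, {x | M.sat false ψ x}) u ∧ M.sat false χ u

/-- CnCK-validity: `φ ∈ CnCK`. -/
def CnCKvalid (φ : CNForm) : Prop :=
  ∀ (M : FSCModel) (w : M.W), M.sat true φ w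

/-- The consequence relation of the logic CnCK: `Γ ⊨_CnCK Δ`. -/
def CnCKconseq (Γ Δ : Set CNForm) : Prop :=
  ∀ (M : FSCModel) (w : M.W), (∀ γ ∈ Γ, M.sat true γ w) → ∃ δ ∈ Δ, M.sat true δ w

/-- A Fischer–Servi conditional model is reflexive iff `R(w,(X,Y),v)` implies `v ∈ X`. -/
def FSCModel.Reflexive (M : FSCModel) : Prop :=
  ∀ {w v : M.W} (XY : Set M.W × Set M.W), M.R w XY v → v ∈ XY.1

/-- CnCK_R-validity: `φ ∈ CnCK_R`. -/
def CnCKRvalid (φ : CNForm) : Prop :=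
  ∀ (M : FSCModel), M.Reflexive → ∀ w : M.W, M.sat true φ w

/-- The consequence relation of the logic CnCK_R: `Γ ⊨_{CnCK_R} Δ`. -/
def CnCKRconseq (Γ Δ : Set CNForm) : Prop :=
  ∀ (M : FSCModel), M.Reflexive → ∀ w : M.W,
    (∀ γ ∈ Γ, M.sat true γ w) → ∃ δ ∈ Δ, M.sat true δ w

/-- Order on the extended model: a fresh root `none` related only to itself. -/
def extLe (M : FSCModel) : Option M.W → Option M.W → Prop
  | some x, some y => M.le x y
  | none, none => True
  | _, _ => False

/-- Accessibility on the extended model. -/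
def extR (M : FSCModel) (w : M.W) :
    Option M.W → Set (Option M.W) × Set (Option M.W) → Option M.W → Prop :=
  fun a XY c =>
    match a, c with
    | some x, some y => M.R x (some ⁻¹' XY.1, some ⁻¹' XY.2) y
    | none, some y => M.le w y
    | _, none => False

/-- Extend a model with a fresh world `none` from which `R` reaches exactly the
upward closure of `w`. -/
def extModel (M : FSCModel) (w : M.W) : FSCModel where
  W := Option M.W
  nonempty := ⟨none⟩
  le := extLe M
  le_refl := by rintro (_ | x) <;> simp [extLe, M.le_refl]
  le_trans := by
    rintro (_ | a) (_ | b) (_ | c) h1 h2 <;>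
      simp_all [extLe] <;> exact M.le_trans h1 h2
  R := extR M w
  fs1 := by
    rintro (_ | a) (_ | b) (_ | c) XY h1 h2
    · exact absurd h2 id
    · exact ⟨some c, h2, M.le_refl c⟩
    · exact absurd h1 id
    · exact absurd h1 id
    · exact absurd h1 id
    · exact absurd h1 id
    · exact absurd h2 id
    · obtain ⟨v', hv1, hv2⟩ := M.fs1 _ h1 h2
      exact ⟨some v', hv1, hv2⟩
  fs2 := by
    rintro (_ | a) (_ | b) (_ | c) XY h1 h2
    · exact absurd h1 id
    · exact absurd h1 id
    · exact absurd h2 id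
    · exact ⟨none, trivial, M.le_trans h1 h2⟩
    · exact absurd h1 id
    · exact absurd h1 id
    · exact absurd h2 id
    · obtain ⟨w', hw1, hw2⟩ := M.fs2 _ h1 h2
      exact ⟨some w', hw1, hw2⟩
  Vpos := fun p o => match o with | some x => M.Vpos p x | none => False
  Vneg := fun p o => match o with | some x => M.Vneg p x | none => False
  Vpos_mono := by
    rintro p (_ | a) (_ | b) h hp <;> simp_all [extLe]
    exact M.Vpos_mono p h hp
  Vneg_mono := by
    rintro p (_ | a) (_ | b) h hp <;> simp_all [extLe]
    exact M.Vneg_mono p h hp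

/-- Satisfaction at old worlds of the extended model agrees with the original. -/
theorem ext_sat (M : FSCModel) (w : M.W) :
    ∀ (χ : CNForm) (b : Bool) (x : M.W),
      (extModel M w).sat b χ (some x) ↔ M.sat b χ x := by
  intro χ
  induction χ with
  | atom p => rintro (_ | _) x <;> exact Iff.rfl
  | conj α β ihα ihβ =>
      rintro (_ | _) x <;> simp only [FSCModel.sat] <;>
        rw [ihα, ihβ]
  | disj α β ihα ihβ =>
      rintro (_ | _) x <;> simp only [FSCModel.sat] <;>
        rw [ihα, ihβ]
  | impl α β ihα ihβ =>
      rintro (_ | _) x <;> simp only [FSCModel.sat] <;>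
      · constructor
        · intro h v hv hα
          exact (ihβ _ v).mp (h (some v) hv ((ihα _ v).mpr hα))
        · rintro h (_ | v) hv hα
          · exact absurd hv (by simp [extModel, extLe])
          · exact (ihβ _ v).mpr (h v hv ((ihα _ v).mp hα))
  | neg α ihα =>
      rintro (_ | _) x <;> simp only [FSCModel.sat] <;> rw [ihα]
  | boxto α β ihα ihβ =>
      have hS : ∀ b, (some ⁻¹' {z | (extModel M w).sat b α z} : Set M.W)
          = {x | M.sat b α x} := by
        intro b; ext y; exact ihα b y
      rintro (_ | _) x <;> simp only [FSCModel.sat] <;>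
      · constructor
        · intro h v hv u hR
          refine (ihβ _ u).mp (h (some v) hv (some u) ?_)
          show M.R v (some ⁻¹' {z | (extModel M w).sat true α z},
            some ⁻¹' {z | (extModel M w).sat false α z}) u
          rw [hS true, hS false]; exact hR
        · rintro h (_ | v) hv (_ | u) hR
          · exact absurd hv (by simp [extModel, extLe])
          · exact absurd hv (by simp [extModel, extLe])
          · exact absurd hR (by simp [extModel, extR])
          · have hR' : M.R v ({x | M.sat true α x}, {x | M.sat false α x}) u := by
              have : M.R v (some ⁻¹' {z | (extModel M w).sat true α z},
                  some ⁻¹' {z | (extModel M w).sat false α z}) u := hR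
              rwa [hS true, hS false] at this
            exact (ihβ _ u).mpr (h v hv u hR')
  | diato α β ihα ihβ =>
      have hS : ∀ b, (some ⁻¹' {z | (extModel M w).sat b α z} : Set M.W)
          = {x | M.sat b α x} := by
        intro b; ext y; exact ihα b y
      rintro (_ | _) x <;> simp only [FSCModel.sat] <;>
      · constructor
        · rintro ⟨(_ | u), hR, hβ⟩
          · exact absurd hR (by simp [extModel, extR])
          · refine ⟨u, ?_, (ihβ _ u).mp hβ⟩
            have : M.R x (some ⁻¹' {z | (extModel M w).sat true α z},
                some ⁻¹' {z | (extModel M w).sat false α z}) u := hR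
            rwa [hS true, hS false] at this
        · rintro ⟨u, hR, hβ⟩
          refine ⟨some u, ?_, (ihβ _ u).mpr hβ⟩
          show M.R x (some ⁻¹' {z | (extModel M w).sat true α z},
            some ⁻¹' {z | (extModel M w).sat false α z}) u
          rw [hS true, hS false]; exact hR

/-- A trivial model with empty accessibility. -/
def trivModel : FSCModel where
  W := Unit
  nonempty := ⟨()⟩
  le := fun _ _ => True
  le_refl := fun _ => trivial
  le_trans := fun _ _ => trivial
  R := fun _ _ _ => False
  fs1 := by intro w w' v XY h1 h2; exact h2.elim
  fs2 := by intro w v v' XY h1 h2; exact h1.elim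
  Vpos := fun _ _ => False
  Vneg := fun _ _ => False
  Vpos_mono := by intro p w v _ hp; exact hp
  Vneg_mono := by intro p w v _ hp; exact hp

/-- φ □→ ψ is CnCK-valid iff ψ is; no might-conditional is CnCK-valid. -/
theorem CnCK_boxto_diato_validity (φ ψ : CNForm) :
    (CnCKvalid (CNForm.boxto φ ψ) ↔ CnCKvalid ψ) ∧
    ¬ CnCKvalid (CNForm.diato φ ψ) := by
  constructor
  · constructor
    · intro h M w
      have h1 := h (extModel M w) none
      have h2 := h1 none trivial (some w) (M.le_refl w)
      exact (ext_sat M w ψ true w).mp h2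
    · intro h M w
      intro v _ u _
      exact h M u
  · intro h
    obtain ⟨u, hR, _⟩ := h trivModel ()
    exact hR
end

section
/- CnK is a modal companion of CnCK: for every CN-formula φ and all sets Γ, Δ of MD-formulas, Γ ⊨_CnK Δ if and only if Tr_φ(Γ) ⊨_CnCK Tr_φ(Δ). -/
/-- Formulas of the modal language MD. -/
inductive MDForm : Type
  | atom : ℕ → MDForm
  | conj : MDForm → MDForm → MDForm
  | disj : MDForm → MDForm → MDForm
  | impl : MDForm → MDForm → MDForm
  | neg  : MDForm → MDForm
  | box  : MDForm → MDForm
  | dia  : MDForm → MDForm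

/-- A Fischer–Servi modal model. -/
structure FSModel where
  W : Type
  nonempty : Nonempty W
  le : W → W → Prop
  le_refl : ∀ w, le w w
  le_trans : ∀ {w v u}, le w v → le v u → le w u
  R : W → W → Prop
  fs1 : ∀ {w w' v}, le w w' → R w v → ∃ v', R w' v' ∧ le v v'
  fs2 : ∀ {w v v'}, R w v → le v v' → ∃ w', le w w' ∧ R w' v'
  Vpos : ℕ → W → Prop
  Vneg : ℕ → W → Prop
  Vpos_mono : ∀ (p : ℕ) {w v}, le w v → Vpos p w → Vpos p v
  Vneg_mono : ∀ (p : ℕ) {w v}, le w v → Vneg p w → Vneg p v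

/-- `M.sat true φ w` is verification `M,w ⊨⁺ φ`; `M.sat false φ w` is falsification `M,w ⊨⁻ φ`. -/
def FSModel.sat (M : FSModel) : Bool → MDForm → M.W → Prop
  | true,  .atom p,   w => M.Vpos p w
  | false, .atom p,   w => M.Vneg p w
  | true,  .conj φ ψ, w => M.sat true φ w ∧ M.sat true ψ w
  | false, .conj φ ψ, w => M.sat false φ w ∨ M.sat false ψ w
  | true,  .disj φ ψ, w => M.sat true φ w ∨ M.sat true ψ w
  | false, .disj φ ψ, w => M.sat false φ w ∧ M.sat false ψ w
  | true,  .impl φ ψ, w => ∀ v, M.le w v → M.sat true φ v → M.sat true ψ v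
  | false, .impl φ ψ, w => ∀ v, M.le w v → M.sat true φ v → M.sat false ψ v
  | true,  .neg φ,    w => M.sat false φ w
  | false, .neg φ,    w => M.sat true φ w
  | true,  .box φ,    w => ∀ v, M.le w v → ∀ u, M.R v u → M.sat true φ u
  | false, .box φ,    w => ∀ v, M.le w v → ∀ u, M.R v u → M.sat false φ u
  | true,  .dia φ,    w => ∃ u, M.R w u ∧ M.sat true φ u
  | false, .dia φ,    w => ∃ u, M.R w u ∧ M.sat false φ u

/-- CnK-validity: `φ ∈ CnK`. -/
def CnKvalid (φ : MDForm) : Prop :=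
  ∀ (M : FSModel) (w : M.W), M.sat true φ w

/-- The consequence relation of the logic CnK: `Γ ⊨_CnK Δ`. -/
def CnKconseq (Γ Δ : Set MDForm) : Prop :=
  ∀ (M : FSModel) (w : M.W), (∀ γ ∈ Γ, M.sat true γ w) → ∃ δ ∈ Δ, M.sat true δ w

/-- The translation `Tr_φ` from MD-formulas to CN-formulas. -/
def TrPhi (φ : CNForm) : MDForm → CNForm
  | .atom p => .atom p
  | .conj ψ χ => .conj (TrPhi φ ψ) (TrPhi φ χ)
  | .disj ψ χ => .disj (TrPhi φ ψ) (TrPhi φ χ)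
  | .impl ψ χ => .impl (TrPhi φ ψ) (TrPhi φ χ)
  | .neg ψ => .neg (TrPhi φ ψ)
  | .box ψ => .boxto φ (TrPhi φ ψ)
  | .dia ψ => .diato φ (TrPhi φ ψ)

/-- From a conditional model, extract a modal model fixing the antecedent φ. -/
def FSCModel.toFS (M : FSCModel) (φ : CNForm) : FSModel where
  W := M.W
  nonempty := M.nonempty
  le := M.le
  le_refl := M.le_refl
  le_trans := M.le_trans
  R := fun w v => M.R w ({x | M.sat true φ x}, {x | M.sat false φ x}) v
  fs1 := fun h hr => M.fs1 _ h hr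
  fs2 := fun hr h => M.fs2 _ hr h
  Vpos := M.Vpos
  Vneg := M.Vneg
  Vpos_mono := M.Vpos_mono
  Vneg_mono := M.Vneg_mono

lemma toFS_sat (M : FSCModel) (φ : CNForm) (ψ : MDForm) :
    ∀ (b : Bool) (w : M.W), (M.toFS φ).sat b ψ w ↔ M.sat b (TrPhi φ ψ) w := by
  induction ψ with
  | atom p => intro b w; cases b <;> exact Iff.rfl
  | conj α β ihα ihβ =>
    intro b w; cases b <;>
      simp only [FSModel.sat, FSCModel.sat, TrPhi, ihα, ihβ]
  | disj α β ihα ihβ =>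
    intro b w; cases b <;>
      simp only [FSModel.sat, FSCModel.sat, TrPhi, ihα, ihβ]
  | impl α β ihα ihβ =>
    intro b w; cases b <;>
      simp only [FSModel.sat, FSCModel.sat, TrPhi, ihα, ihβ] <;>
        exact forall_congr' fun v => imp_congr Iff.rfl (imp_congr (ihα _ _) (ihβ _ _))
  | neg α ihα =>
    intro b w; cases b <;>
      simp only [FSModel.sat, FSCModel.sat, TrPhi, ihα]
  | box α ihα =>
    intro b w; cases b <;>
      simp only [FSModel.sat, FSCModel.sat, TrPhi, ihα] <;>
        exact forall_congr' fun v => imp_congr Iff.rfl (forall_congr' fun u => imp_congr Iff.rfl (ihα _ _))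
  | dia α ihα =>
    intro b w; cases b <;>
      simp only [FSModel.sat, FSCModel.sat, TrPhi, ihα] <;>
        exact exists_congr fun u => and_congr Iff.rfl (ihα _ _)

/-- From a modal model, build a conditional model with constant indexed relation. -/
def FSModel.toFSC (N : FSModel) : FSCModel where
  W := N.W
  nonempty := N.nonempty
  le := N.le
  le_refl := N.le_refl
  le_trans := N.le_trans
  R := fun w _ v => N.R w v
  fs1 := fun _ h hr => N.fs1 h hr
  fs2 := fun _ hr h => N.fs2 hr h
  Vpos := N.Vpos
  Vneg := N.Vneg
  Vpos_mono := N.Vpos_mono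
  Vneg_mono := N.Vneg_mono

lemma toFSC_sat (N : FSModel) (φ : CNForm) (ψ : MDForm) :
    ∀ (b : Bool) (w : N.W), N.toFSC.sat b (TrPhi φ ψ) w ↔ N.sat b ψ w := by
  induction ψ with
  | atom p => intro b w; cases b <;> exact Iff.rfl
  | conj α β ihα ihβ =>
    intro b w; cases b <;>
      simp only [FSModel.sat, FSCModel.sat, TrPhi, ihα, ihβ]
  | disj α β ihα ihβ =>
    intro b w; cases b <;>
      simp only [FSModel.sat, FSCModel.sat, TrPhi, ihα, ihβ]
  | impl α β ihα ihβ =>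
    intro b w; cases b <;>
      simp only [FSModel.sat, FSCModel.sat, TrPhi, ihα, ihβ] <;>
        exact forall_congr' fun v => imp_congr Iff.rfl (imp_congr (ihα _ _) (ihβ _ _))
  | neg α ihα =>
    intro b w; cases b <;>
      simp only [FSModel.sat, FSCModel.sat, TrPhi, ihα]
  | box α ihα =>
    intro b w; cases b <;>
      simp only [FSModel.sat, FSCModel.sat, TrPhi, ihα] <;>
        exact forall_congr' fun v => imp_congr Iff.rfl (forall_congr' fun u => imp_congr Iff.rfl (ihα _ _))
  | dia α ihα =>
    intro b w; cases b <;>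
      simp only [FSModel.sat, FSCModel.sat, TrPhi, ihα] <;>
        exact exists_congr fun u => and_congr Iff.rfl (ihα _ _)

/-- CnK is a modal companion of CnCK. -/
theorem CnK_modal_companion_of_CnCK (φ : CNForm) (Γ Δ : Set MDForm) :
    CnKconseq Γ Δ ↔ CnCKconseq (TrPhi φ '' Γ) (TrPhi φ '' Δ) := by
  constructor
  · intro h M w hΓ
    obtain ⟨δ, hδ, hsat⟩ := h (M.toFS φ) w (fun γ hγ =>
      (toFS_sat M φ γ true w).2 (hΓ _ ⟨γ, hγ, rfl⟩))
    exact ⟨TrPhi φ δ, ⟨δ, hδ, rfl⟩, (toFS_sat M φ δ true w).1 hsat⟩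
  · intro h N w hΓ
    obtain ⟨δ', ⟨δ, hδ, rfl⟩, hsat⟩ := h N.toFSC w (by
      rintro γ' ⟨γ, hγ, rfl⟩
      exact (toFSC_sat N φ γ true w).2 (hΓ γ hγ))
    exact ⟨δ, hδ, (toFSC_sat N φ δ true w).1 hsat⟩
end

section
/- In CnCK_R, the would-conditional □→ is fully hyperconnexive: for all CN-formulas φ, ψ, the formulas ¬(¬φ□→φ), (φ□→¬ψ)□→¬(φ□→ψ), and ¬(φ□→ψ)□→(φ□→¬ψ) are CnCK_R-valid, and the consecutions {φ□→¬ψ} ⊨_{CnCK_R} {¬(φ□→ψ)} and {¬(φ□→ψ)} ⊨_{CnCK_R} {φ□→¬ψ} hold; moreover, there exist CN-formulas φ, ψ such that (φ□→ψ)□→(ψ□→φ) ∉ CnCK_R, and there exist CN-formulas φ, ψ such that {φ□→ψ} ⊨_{CnCK_R} {ψ□→φ} fails. -/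
-- counterexample model
def Mx : FSCModel where
  W := Unit
  nonempty := ⟨()⟩
  le _ _ := True
  le_refl _ := trivial
  le_trans _ _ := trivial
  R _ XY v := v ∈ XY.1
  fs1 := fun XY _ h => ⟨(), h, trivial⟩
  fs2 := fun XY h _ => ⟨(), trivial, h⟩
  Vpos p _ := p = 1
  Vneg _ _ := False
  Vpos_mono := fun _ _ _ _ h => h
  Vneg_mono := fun _ _ _ _ h => h

theorem Mx_refl : Mx.Reflexive := fun _ h => h

/-- the would-conditional □→ is fully hyperconnexive in CnCK_R. -/
theorem CnCKR_boxto_fully_hyperconnexive :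
    (∀ φ ψ : CNForm,
      CnCKRvalid (CNForm.neg (CNForm.boxto (CNForm.neg φ) φ)) ∧
      CnCKRvalid (CNForm.boxto (CNForm.boxto φ (CNForm.neg ψ))
        (CNForm.neg (CNForm.boxto φ ψ))) ∧
      CnCKRvalid (CNForm.boxto (CNForm.neg (CNForm.boxto φ ψ))
        (CNForm.boxto φ (CNForm.neg ψ))) ∧
      CnCKRconseq {CNForm.boxto φ (CNForm.neg ψ)} {CNForm.neg (CNForm.boxto φ ψ)} ∧
      CnCKRconseq {CNForm.neg (CNForm.boxto φ ψ)} {CNForm.boxto φ (CNForm.neg ψ)}) ∧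
    (∃ φ ψ : CNForm,
      ¬ CnCKRvalid (CNForm.boxto (CNForm.boxto φ ψ) (CNForm.boxto ψ φ))) ∧
    (∃ φ ψ : CNForm,
      ¬ CnCKRconseq {CNForm.boxto φ ψ} {CNForm.boxto ψ φ}) := by
  refine ⟨fun φ ψ => ⟨?_, ?_, ?_, ?_, ?_⟩, ?_, ?_⟩
  · -- ¬(¬φ □→ φ)
    intro M hR w
    show M.sat false (CNForm.boxto (CNForm.neg φ) φ) w
    intro v _ u hu
    exact hR _ hu
  · -- (φ□→¬ψ)□→¬(φ□→ψ)
    intro M hR w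
    intro v _ u hu
    exact hR _ hu
  · -- ¬(φ□→ψ)□→(φ□→¬ψ)
    intro M hR w
    intro v _ u hu
    exact hR _ hu
  · intro M hR w h
    have := h (CNForm.boxto φ (CNForm.neg ψ)) (Set.mem_singleton _)
    exact ⟨CNForm.neg (CNForm.boxto φ ψ), Set.mem_singleton _, this⟩
  · intro M hR w h
    have := h (CNForm.neg (CNForm.boxto φ ψ)) (Set.mem_singleton _)
    exact ⟨CNForm.boxto φ (CNForm.neg ψ), Set.mem_singleton _, this⟩
  · refine ⟨CNForm.atom 0, CNForm.atom 1, fun h => ?_⟩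
    have hvac : Mx.sat true (CNForm.boxto (CNForm.atom 0) (CNForm.atom 1)) () := by
      intro v _ u hu
      exact absurd hu Nat.zero_ne_one
    have := h Mx Mx_refl () () trivial () hvac () trivial () rfl
    exact Nat.zero_ne_one this
  · refine ⟨CNForm.atom 0, CNForm.atom 1, fun h => ?_⟩
    have hvac : Mx.sat true (CNForm.boxto (CNForm.atom 0) (CNForm.atom 1)) () := by
      intro v _ u hu
      exact absurd hu Nat.zero_ne_one
    obtain ⟨δ, hδ, hsat⟩ := h Mx Mx_refl () (by rintro γ rfl; exact hvac)
    rw [Set.mem_singleton_iff] at hδ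
    subst hδ
    exact Nat.zero_ne_one (hsat () trivial () rfl)
end

section
/- For every CN-formula φ with φ ∈ CnCK_R, the translation Tr_φ is a faithful embedding of CnK into CnCK_R: for all sets Γ, Δ of MD-formulas, Γ ⊨_CnK Δ if and only if Tr_φ(Γ) ⊨_{CnCK_R} Tr_φ(Δ). -/
/-! A conditional model read through its `‖φ‖`-indexed relation is a modal model in which `ψ`
and `Tr_φ ψ` agree, for any `φ`. Conversely a modal model `N` becomes a reflexive conditional model
by using `N.R` for antecedents verified everywhere and the empty relation otherwise; a
`CnCK_R`-valid `φ` is verified everywhere there, so `φ □→` and `φ ◇→` act exactly as `□` and `◇`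
of `N`. -/

def FSCModel.toFSModel (M : FSCModel) (φ : CNForm) : FSModel where
  W := M.W
  nonempty := M.nonempty
  le := M.le
  le_refl := M.le_refl
  le_trans := M.le_trans
  R := fun w v => M.R w ({x | M.sat true φ x}, {x | M.sat false φ x}) v
  fs1 := M.fs1 _
  fs2 := M.fs2 _
  Vpos := M.Vpos
  Vneg := M.Vneg
  Vpos_mono := M.Vpos_mono
  Vneg_mono := M.Vneg_mono

theorem FSCModel.sat_TrPhi_iff (M : FSCModel) (φ : CNForm) (ψ : MDForm) (b : Bool) (w : M.W) :
    M.sat b (TrPhi φ ψ) w ↔ (M.toFSModel φ).sat b ψ w := by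
  induction ψ generalizing b w <;> cases b <;>
    simp_all [TrPhi, FSModel.sat, FSCModel.sat, FSCModel.toFSModel]

def FSModel.toFSCModel (N : FSModel) : FSCModel where
  W := N.W
  nonempty := N.nonempty
  le := N.le
  le_refl := N.le_refl
  le_trans := N.le_trans
  R := fun w XY v => N.R w v ∧ XY.1 = Set.univ
  fs1 := fun _ hle ⟨hR, hX⟩ =>
    let ⟨v', hR', hle'⟩ := N.fs1 hle hR
    ⟨v', ⟨hR', hX⟩, hle'⟩
  fs2 := fun _ ⟨hR, hX⟩ hle =>
    let ⟨w', hle', hR'⟩ := N.fs2 hR hle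
    ⟨w', hle', hR', hX⟩
  Vpos := N.Vpos
  Vneg := N.Vneg
  Vpos_mono := N.Vpos_mono
  Vneg_mono := N.Vneg_mono

theorem FSModel.toFSCModel_reflexive (N : FSModel) : N.toFSCModel.Reflexive :=
  fun _ hR => hR.2 ▸ Set.mem_univ _

theorem FSModel.sat_TrPhi_iff (N : FSModel) {φ : CNForm}
    (hφ : ∀ x, N.toFSCModel.sat true φ x) (ψ : MDForm) (b : Bool) (w : N.W) :
    N.toFSCModel.sat b (TrPhi φ ψ) w ↔ N.sat b ψ w := by
  have hφ_univ : {x | N.toFSCModel.sat true φ x} = Set.univ := Set.eq_univ_of_forall hφ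
  induction ψ generalizing b w <;> cases b <;>
    simp_all [TrPhi, FSModel.sat, FSCModel.sat, FSModel.toFSCModel]

theorem CnCKconseq.toCnCKRconseq {Γ Δ : Set CNForm} (h : CnCKconseq Γ Δ) :
    CnCKRconseq Γ Δ :=
  fun M _ => h M

theorem CnKconseq.image_TrPhi {Γ Δ : Set MDForm} (h : CnKconseq Γ Δ) (φ : CNForm) :
    CnCKconseq (TrPhi φ '' Γ) (TrPhi φ '' Δ) := by
  intro M w hΓ
  obtain ⟨δ, hδ, hw⟩ := h (M.toFSModel φ) w fun γ hγ =>
    (M.sat_TrPhi_iff φ γ true w).mp (hΓ _ ⟨γ, hγ, rfl⟩)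
  exact ⟨TrPhi φ δ, ⟨δ, hδ, rfl⟩, (M.sat_TrPhi_iff φ δ true w).mpr hw⟩

theorem CnKconseq_of_CnCKRconseq_image_TrPhi {φ : CNForm} (hφ : CnCKRvalid φ)
    {Γ Δ : Set MDForm} (h : CnCKRconseq (TrPhi φ '' Γ) (TrPhi φ '' Δ)) : CnKconseq Γ Δ := by
  intro N w hΓ
  have hN : N.toFSCModel.Reflexive := N.toFSCModel_reflexive
  have htr := N.sat_TrPhi_iff (hφ _ hN)
  obtain ⟨-, ⟨δ, hδ, rfl⟩, hw⟩ := h N.toFSCModel hN w <| by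
    rintro _ ⟨γ, hγ, rfl⟩
    exact (htr γ true w).mpr (hΓ γ hγ)
  exact ⟨δ, hδ, (htr δ true w).mp hw⟩

/-- for φ ∈ CnCK_R, Tr_φ faithfully embeds CnK into CnCK_R. -/
theorem Tr_faithful_embedding_CnK_into_CnCKR (φ : CNForm) (hφ : CnCKRvalid φ)
    (Γ Δ : Set MDForm) :
    CnKconseq Γ Δ ↔ CnCKRconseq (TrPhi φ '' Γ) (TrPhi φ '' Δ) :=
  ⟨fun h => (h.image_TrPhi φ).toCnCKRconseq, CnKconseq_of_CnCKRconseq_image_TrPhi hφ⟩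
end
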